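/- Let (L, A) be a rational structure with uniqueness on a recursively presented finitely generated group G, and let H ≤ G be an L-rational subgroup, i.e. L_H = L ∩ π^{-1}(H) is a regular language. Then the generalized word problem of G with respect to H is solvable: the set of words over A representing elements of H is decidable. -/

import Mathlib

def evalWord {A G : Type} [Group G] (a : A → G) (w : List A) : G :=
  (w.map a).prod

def IsRegularLang {A : Type} (L : Language A) : Prop :=
  ∃ (σ : Type) (_ : Fintype σ) (M : DFA A σ), M.accepts = L

/-!
Each `g : G` has a unique normal form `nf g ∈ L`. The map `w ↦ nf (π w)` has a recursively
enumerable graph: `u` is the normal form of `w` iff `u ∈ L` and, for some word `v`, both `u v`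
and `w v` represent `1`. A total function with r.e. graph pulls a decidable predicate back to one
that is r.e. and co-r.e., hence decidable; and `π w ∈ H` iff `nf (π w)` lies in the regular,
hence decidable, language `L ∩ π⁻¹(H)`.
-/

open Nat.Partrec.Code in
theorem REPred.iff_exists_computable {α : Type*} [Primcodable α] {p : α → Prop} :
    REPred p ↔ ∃ f : α → ℕ → Bool, Computable₂ f ∧ ∀ a, p a ↔ ∃ n, f a n = true := by
  refine ⟨fun hp => ?_, fun ⟨f, hf, hpf⟩ => ?_⟩
  · obtain ⟨c, hc⟩ := exists_code.1 hp
    refine ⟨fun a n => (evaln n c (Encodable.encode a)).isSome, ?_, fun a => ?_⟩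
    · exact (Primrec.option_isSome.comp (primrec_evaln.comp
        ((Primrec.snd.pair (Primrec.const c)).pair (Primrec.encode.comp Primrec.fst)))).to_comp
    · have hdom : p a ↔ (eval c (Encodable.encode a)).Dom := by
        rw [hc]; simp [Part.assert]
      simp only [hdom, Part.dom_iff_mem, evaln_complete, Option.isSome_iff_exists]
      exact ⟨fun ⟨x, k, hk⟩ => ⟨k, x, hk⟩, fun ⟨k, x, hk⟩ => ⟨x, k, hk⟩⟩
  · exact (Partrec.rfind hf.partrec₂).dom_re.of_eq fun a => by simp [Nat.rfind_dom, hpf]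

theorem REPred.comp {α β : Type*} [Primcodable α] [Primcodable β] {p : β → Prop} {f : α → β}
    (hp : REPred p) (hf : Computable f) : REPred fun a => p (f a) :=
  Partrec.comp hp hf

theorem REPred.and {α : Type*} [Primcodable α] {p q : α → Prop} (hp : REPred p)
    (hq : REPred q) : REPred fun a => p a ∧ q a := by
  obtain ⟨f, hf, hpf⟩ := REPred.iff_exists_computable.1 hp
  obtain ⟨g, hg, hqg⟩ := REPred.iff_exists_computable.1 hq
  refine REPred.iff_exists_computable.2 ⟨fun a n => f a n.unpair.1 && g a n.unpair.2, ?_, ?_⟩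
  · exact (Primrec.and.to_comp.comp
      (hf.comp Computable.fst (Computable.fst.comp (Computable.unpair.comp Computable.snd)))
      (hg.comp Computable.fst (Computable.snd.comp (Computable.unpair.comp Computable.snd))))
  · intro a
    simp only [hpf, hqg, Bool.and_eq_true]
    constructor
    · rintro ⟨⟨m, hm⟩, ⟨n, hn⟩⟩
      exact ⟨Nat.pair m n, by simpa using hm, by simpa using hn⟩
    · rintro ⟨k, hm, hn⟩
      exact ⟨⟨_, hm⟩, ⟨_, hn⟩⟩

theorem REPred.exists {α β : Type*} [Primcodable α] [Primcodable β] {r : α × β → Prop}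
    (hr : REPred r) : REPred fun a => ∃ b, r (a, b) := by
  obtain ⟨f, hf, hrf⟩ := REPred.iff_exists_computable.1 hr
  refine REPred.iff_exists_computable.2
    ⟨fun a n => Option.casesOn (Encodable.decode (α := β) n.unpair.1) false
      fun b => f (a, b) n.unpair.2, ?_, ?_⟩
  · have hdecode : Computable fun x : α × ℕ => Encodable.decode (α := β) x.2.unpair.1 :=
      Computable.decode.comp (Computable.fst.comp (Computable.unpair.comp Computable.snd))
    have hwitness : Computable₂ fun (x : α × ℕ) (b : β) => f (x.1, b) x.2.unpair.2 :=
      hf.comp (Computable.pair (Computable.fst.comp Computable.fst) Computable.snd)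
        (Computable.snd.comp (Computable.unpair.comp (Computable.snd.comp Computable.fst)))
    exact (Computable.option_casesOn hdecode (Computable.const false) hwitness).to₂
  · intro a
    simp only [hrf]
    constructor
    · rintro ⟨b, n, hn⟩
      exact ⟨Nat.pair (Encodable.encode b) n, by simpa using hn⟩
    · rintro ⟨k, hk⟩
      cases hb : Encodable.decode (α := β) k.unpair.1 with
      | none => simp [hb] at hk
      | some b => exact ⟨b, k.unpair.2, by simpa [hb] using hk⟩

theorem ComputablePred.comp_of_rePred_graph {α β : Type*} [Primcodable α] [Primcodable β]
    {p : β → Prop} (hp : ComputablePred p) {f : α → β}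
    (hf : REPred fun x : α × β => f x.1 = x.2) : ComputablePred fun a => p (f a) := by
  refine ComputablePred.computable_iff_re_compl_re'.2 ⟨?_, ?_⟩
  · exact (hf.and (hp.to_re.comp Computable.snd)).exists.of_eq fun _ => by simp
  · exact (hf.and (hp.not.to_re.comp Computable.snd)).exists.of_eq fun _ => by simp

theorem DFA.computablePred_mem_accepts {α σ : Type*} [Primcodable α] [Finite α] [Fintype σ]
    (M : DFA α σ) : ComputablePred (· ∈ M.accepts) := by
  classical
  let : Primcodable σ := Primcodable.ofEquiv _ (Fintype.equivFin σ)
  have hstep : Primrec₂ M.step := Primrec.dom_finite _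
  have heval : Primrec (M.evalFrom M.start) :=
    Primrec.list_foldl Primrec.id (Primrec.const M.start)
      (hstep.comp (Primrec.fst.comp Primrec.snd) (Primrec.snd.comp Primrec.snd)).to₂
  exact ((Primrec.dom_finite fun s => decide (s ∈ M.accept)).comp heval).to_comp.computablePred

theorem IsRegularLang.computablePred {A : Type} [Primcodable A] [Finite A] {L : Language A}
    (hL : IsRegularLang L) : ComputablePred (· ∈ L) := by
  obtain ⟨σ, _, M, rfl⟩ := hL
  exact M.computablePred_mem_accepts

section evalWord

variable {A G : Type} [Group G] (a : A → G)

theorem evalWord_append (u v : List A) : evalWord a (u ++ v) = evalWord a u * evalWord a v := by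
  simp [evalWord]

theorem rePred_evalWord_eq [Primcodable A] (hsurj : Function.Surjective (evalWord a))
    (hrecpres : REPred fun w : List A => evalWord a w = 1) :
    REPred fun x : List A × List A => evalWord a x.1 = evalWord a x.2 := by
  have hcancel : REPred fun y : (List A × List A) × List A =>
      evalWord a (y.1.1 ++ y.2) = 1 ∧ evalWord a (y.1.2 ++ y.2) = 1 :=
    (hrecpres.comp
        (Primrec.list_append.comp (Primrec.fst.comp Primrec.fst) Primrec.snd).to_comp).and
      (hrecpres.comp
        (Primrec.list_append.comp (Primrec.snd.comp Primrec.fst) Primrec.snd).to_comp)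
  refine hcancel.exists.of_eq fun x => ?_
  simp only [evalWord_append, mul_eq_one_iff_eq_inv]
  constructor
  · rintro ⟨v, h₁, h₂⟩
    rw [h₁, h₂]
  · intro h
    obtain ⟨v, hv⟩ := hsurj (evalWord a x.1)⁻¹
    exact ⟨v, by rw [hv, inv_inv], by rw [hv, inv_inv, h]⟩

end evalWord

theorem generalized_word_problem_solvable_of_rational_subgroup_general
    {A G : Type} [Fintype A] [Primcodable A] [Group G] (a : A → G)
    (hrecpres : REPred (fun w : List A => evalWord a w = 1))
    (L : Language A) (hreg : IsRegularLang L)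
    (hbij : ∀ g : G, ∃! w, w ∈ L ∧ evalWord a w = g)
    (H : Subgroup G)
    (hrat : IsRegularLang {w | w ∈ L ∧ evalWord a w ∈ H}) :
    ComputablePred (fun w : List A => evalWord a w ∈ H) := by
  choose nf hnf hnf_unique using hbij
  have hsurj : Function.Surjective (evalWord a) := fun g => ⟨nf g, (hnf g).2⟩
  have hgraph : REPred fun x : List A × List A => (nf ∘ evalWord a) x.1 = x.2 :=
    ((hreg.computablePred.to_re.comp Computable.snd).and
      ((rePred_evalWord_eq a hsurj hrecpres).comp (Computable.snd.pair Computable.fst))).of_eq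
      fun x => ⟨fun h => (hnf_unique _ x.2 h).symm, fun h => h ▸ hnf _⟩
  refine (hrat.computablePred.comp_of_rePred_graph hgraph).of_eq fun w => ?_
  obtain ⟨hL, heval⟩ := hnf (evalWord a w)
  exact ⟨fun h => heval ▸ h.2, fun h => ⟨hL, heval.symm ▸ h⟩⟩

/-- If `(L,A)` is a rational structure with uniqueness on a recursively presented finitely
generated group `G` and `H` is an `L`-rational subgroup, then the generalized word problem of
`G` with respect to `H` is solvable. -/
theorem generalized_word_problem_solvable_of_rational_subgroup
    {A G : Type} [Fintype A] [Primcodable A] [Group G] (a : A → G)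
    (hinv : ∀ x : A, ∃ y : A, a y = (a x)⁻¹)
    (hrecpres : REPred (fun w : List A => evalWord a w = 1))
    (L : Language A) (hreg : IsRegularLang L)
    (hbij : ∀ g : G, ∃! w, w ∈ L ∧ evalWord a w = g)
    (H : Subgroup G)
    (hrat : IsRegularLang {w | w ∈ L ∧ evalWord a w ∈ H}) :
    ComputablePred (fun w : List A => evalWord a w ∈ H) :=
  generalized_word_problem_solvable_of_rational_subgroup_general a hrecpres L hreg hbij H hrat
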